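/- arXiv:2105.05879 — 8 statements merged into one kernel-verified Lean document; each statement's English description precedes it below -/
import Mathlib

section
/- Let d ≥ 1, t ∈ ℕ, and let u_1, …, u_L be unit vectors in ℝ^d. Then the following are equivalent: (b) for every k ∈ {1, …, t} and every x ∈ ℝ^d, (1/L)·∑_{ℓ=1}^L ⟨x, u_ℓ⟩^{2k} = c_{d,k}·‖x‖^{2k}; (c) for every k ∈ {1, …, t}, (1/L²)·∑_{ℓ=1}^L ∑_{ℓ'=1}^L ⟨u_ℓ, u_{ℓ'}⟩^{2k} = c_{d,k}. -/
/-!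
Write `⟪x, u⟫ ^ 2k = ⟪x^{⊗2k}, u^{⊗2k}⟫` in `(ℝ^d)^{⊗2k}`, and let `S` be the tensor whose entry
at a multi-index `i` counts the perfect matchings of the `2k` slots that pair only equal indices.
Removing the pair through a fixed slot gives `⟪S, x^{⊗2k}⟫ = (2k-1)!! ‖x‖^{2k}` and
`‖S‖² = (2k-1)!! · d(d+2)⋯(d+2k-2)`. For `V = (1/L) ∑ u_ℓ^{⊗2k}` this gives `⟪V, S⟫ = (2k-1)!!`, so
by Cauchy–Schwarz `‖V‖² ≥ c_{d,k}`, with equality iff `V = S / (d(d+2)⋯(d+2k-2))`. Condition (c)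
says `‖V‖² = c_{d,k}`, and pairing `V` with `x^{⊗2k}` then gives (b). Conversely (b) at `x = u_ℓ`
gives (c).
-/

open RealInnerProductSpace

/-- `c_{d,k} = (1·3·5⋯(2k−1)) / (d·(d+2)⋯(d+2(k−1)))`. -/
noncomputable def designConst (d k : ℕ) : ℝ :=
  (∏ i ∈ Finset.range k, (2 * (i : ℝ) + 1)) / ∏ i ∈ Finset.range k, ((d : ℝ) + 2 * i)

open Finset

section Pairings

variable {ι κ α : Type*} [DecidableEq ι]

def insertPair (a b : ι) (c c' : α) (j : {x // x ≠ a ∧ x ≠ b} → α) : ι → α :=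
  fun x => if h : x = a then c else if h' : x = b then c' else j ⟨x, h, h'⟩

variable {a b : ι}

@[simp] lemma insertPair_left (c c' : α) (j : {x // x ≠ a ∧ x ≠ b} → α) :
    insertPair a b c c' j a = c := by
  simp [insertPair]

@[simp] lemma insertPair_right (hab : a ≠ b) (c c' : α) (j : {x // x ≠ a ∧ x ≠ b} → α) :
    insertPair a b c c' j b = c' := by
  simp [insertPair, hab.symm]

@[simp] lemma insertPair_val (c c' : α) (j : {x // x ≠ a ∧ x ≠ b} → α)
    (x : {x // x ≠ a ∧ x ≠ b}) : insertPair a b c c' j x = j x := by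
  simp [insertPair, x.2.1, x.2.2]

variable [Fintype ι]

def insertPairEquiv (hab : a ≠ b) : α × α × ({x // x ≠ a ∧ x ≠ b} → α) ≃ (ι → α) where
  toFun p := insertPair a b p.1 p.2.1 p.2.2
  invFun i := (i a, i b, fun x => i x)
  left_inv p := by simp [hab]
  right_inv i := by
    funext x
    by_cases hxa : x = a
    · simp [hxa]
    by_cases hxb : x = b
    · simp [hxb, hab]
    · exact insertPair_val (x := ⟨x, hxa, hxb⟩) _ _ _

lemma sum_eq_sum_insertPair [Fintype α] {M : Type*} [AddCommMonoid M] (hab : a ≠ b)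
    (F : (ι → α) → M) :
    ∑ i, F i = ∑ c, ∑ c', ∑ j : {x // x ≠ a ∧ x ≠ b} → α, F (insertPair a b c c' j) := by
  simp only [← (insertPairEquiv hab).sum_comp, Fintype.sum_prod_type]
  rfl

lemma prod_eq_mul_mul_prod_ne {M : Type*} [CommMonoid M] (hab : a ≠ b) (f : ι → M) :
    ∏ x, f x = f a * f b * ∏ x : {x // x ≠ a ∧ x ≠ b}, f x := by
  rw [← Finset.prod_subtype ((univ.erase a).erase b) (by simp [and_comm]), mul_assoc,
    mul_prod_erase _ _ (by simp [hab.symm]), mul_prod_erase _ _ (mem_univ a)]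

lemma prod_insertPair {M : Type*} [CommMonoid M] (hab : a ≠ b) (f : α → M) (c c' : α)
    (j : {x // x ≠ a ∧ x ≠ b} → α) :
    ∏ x, f (insertPair a b c c' j x) = f c * f c' * ∏ x, f (j x) := by
  simp [prod_eq_mul_mul_prod_ne hab, hab]

lemma card_subtype_ne_and_ne (hab : a ≠ b) :
    Fintype.card {x // x ≠ a ∧ x ≠ b} = Fintype.card ι - 2 := by
  have : ({x | x ≠ a ∧ x ≠ b} : Finset ι) = (univ.erase a).erase b := by
    ext x; simp [and_comm]
  rw [Fintype.card_subtype, this, card_erase_of_mem (by simp [hab.symm]),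
    card_erase_of_mem (mem_univ a), card_univ, Nat.sub_sub]

variable [DecidableEq α]

/-- Perfect matchings of `ι`, as fixed-point-free involutions, all of whose pairs are
monochromatic under `i`. -/
def pairings (i : ι → α) : Finset (ι → ι) :=
  {P | (∀ x, P (P x) = x) ∧ (∀ x, P x ≠ x) ∧ ∀ x, i (P x) = i x}

def pairingCount (i : ι → α) : ℕ := #(pairings i)

lemma mem_pairings {i : ι → α} {P : ι → ι} :
    P ∈ pairings i ↔ (∀ x, P (P x) = x) ∧ (∀ x, P x ≠ x) ∧ ∀ x, i (P x) = i x := by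
  simp [pairings]

lemma pairingCount_comp_equiv [Fintype κ] [DecidableEq κ] (e : κ ≃ ι) (i : ι → α) :
    pairingCount (i ∘ e) = pairingCount i :=
  card_equiv (e.arrowCongr e) fun P => by
    simp [mem_pairings, e.surjective.forall, e.apply_eq_iff_eq]

lemma pairingCount_of_isEmpty [IsEmpty ι] (i : ι → α) : pairingCount i = 1 := by
  simp [pairingCount, pairings]

omit [Fintype ι] in
lemma forall_iff_left_right_subtype (p : ι → Prop) :
    (∀ x, p x) ↔ p a ∧ p b ∧ ∀ x : {x // x ≠ a ∧ x ≠ b}, p x := by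
  refine ⟨fun h => ⟨h a, h b, fun x => h x⟩, fun ⟨ha, hb, h⟩ x => ?_⟩
  by_cases hxa : x = a
  · exact hxa ▸ ha
  by_cases hxb : x = b
  · exact hxb ▸ hb
  · exact h ⟨x, hxa, hxb⟩

omit [Fintype ι] [DecidableEq ι] in
lemma apply_ne_and_ne_of_involutive {P : ι → ι} (hP : ∀ x, P (P x) = x) (hPa : P a = b)
    {x : ι} (hx : x ≠ a ∧ x ≠ b) : P x ≠ a ∧ P x ≠ b := by
  constructor <;> intro h
  · exact hx.2 (by rw [← hP x, h, hPa])
  · exact hx.1 (by rw [← hP x, h, ← hPa, hP])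

lemma card_filter_pairings_apply_eq (i : ι → α) (hab : a ≠ b) (hi : i a = i b) :
    #{P ∈ pairings i | P a = b} = pairingCount fun x : {x // x ≠ a ∧ x ≠ b} => i x := by
  refine card_bij'
    (fun P hP x => ⟨P x, apply_ne_and_ne_of_involutive
      (mem_pairings.1 (mem_filter.1 hP).1).1 (mem_filter.1 hP).2 x.2⟩)
    (fun P' _ => insertPair a b b a fun x => (P' x : ι)) ?_ ?_ ?_ ?_
  · intro P hP
    obtain ⟨hinv, hfix, hcol⟩ := mem_pairings.1 (mem_filter.1 hP).1
    simp [mem_pairings, Subtype.ext_iff, hinv, hfix, hcol]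
  · intro P' hP'
    obtain ⟨hinv, hfix, hcol⟩ := mem_pairings.1 hP'
    simp only [mem_filter, mem_pairings]
    refine ⟨⟨?_, ?_, ?_⟩, insertPair_left _ _ _⟩ <;>
      rw [forall_iff_left_right_subtype (a := a) (b := b)]
    · simp [hab, hinv]
    · simpa [hab, hab.symm] using fun x hxa hxb h => hfix ⟨x, hxa, hxb⟩ (Subtype.ext h)
    · simp [hab, hi, hcol]
  · intro P hP
    obtain ⟨hP, hPa⟩ := mem_filter.1 hP
    have hPb : P b = a := hPa ▸ (mem_pairings.1 hP).1 a
    funext x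
    revert x
    rw [forall_iff_left_right_subtype (a := a) (b := b)]
    simp [hab, hPa, hPb]
  · intro P' _
    funext x
    simp

lemma pairingCount_eq_sum (a : ι) (i : ι → α) :
    pairingCount i = ∑ b ∈ univ.erase a,
      if i a = i b then pairingCount (fun x : {x // x ≠ a ∧ x ≠ b} => i x) else 0 := by
  rw [pairingCount, card_eq_sum_card_fiberwise (f := fun P => P a) (t := univ) (by simp),
    ← add_sum_erase _ _ (mem_univ a)]
  have hfix : #{P ∈ pairings i | P a = a} = 0 := by
    simp +contextual [mem_pairings]
  rw [hfix, zero_add]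
  refine sum_congr rfl fun b hb => ?_
  split_ifs with hi
  · exact card_filter_pairings_apply_eq i (ne_of_mem_erase hb).symm hi
  · rw [card_eq_zero, filter_eq_empty_iff]
    rintro P hP rfl
    exact hi ((mem_pairings.1 hP).2.2 a).symm

lemma sum_pairingCount_mul [Fintype α] {R : Type*} [Semiring R] (a : ι) (F : (ι → α) → R) :
    ∑ i, (pairingCount i : R) * F i =
      ∑ b ∈ univ.erase a, ∑ c, ∑ j : {x // x ≠ a ∧ x ≠ b} → α,
        (pairingCount j : R) * F (insertPair a b c c j) := by
  simp only [pairingCount_eq_sum a, Nat.cast_sum, sum_mul]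
  rw [sum_comm]
  refine sum_congr rfl fun b hb => ?_
  rw [sum_eq_sum_insertPair (ne_of_mem_erase hb).symm]
  simp [(ne_of_mem_erase hb).symm, ite_mul, sum_ite_irrel]

/-- Giving `b` the colour of `b'` and deleting `a, b'` yields `j` relabelled by the swap
`b ↔ b'`. -/
lemma pairingCount_insertPair_restrict {b' : ι} (hab : a ≠ b) (hb'a : b' ≠ a) (hb'b : b' ≠ b)
    (j : {x // x ≠ a ∧ x ≠ b} → α) :
    pairingCount (fun x : {x // x ≠ a ∧ x ≠ b'} =>
      insertPair a b (j ⟨b', hb'a, hb'b⟩) (j ⟨b', hb'a, hb'b⟩) j x) = pairingCount j := by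
  have hswap : ∀ x, (x ≠ a ∧ x ≠ b') ↔ (Equiv.swap b b' x ≠ a ∧ Equiv.swap b b' x ≠ b) := by
    intro x
    simp only [ne_eq, Equiv.swap_apply_eq_iff, Equiv.swap_apply_of_ne_of_ne hab hb'a.symm,
      Equiv.swap_apply_left]
  refine (congrArg pairingCount ?_).trans
    (pairingCount_comp_equiv ((Equiv.swap b b').subtypeEquiv hswap) j)
  funext x
  by_cases hxb : (x : ι) = b
  · simp [hxb, hab]
  · simp [insertPair, x.2.1, hxb, Equiv.swap_apply_of_ne_of_ne hxb x.2.2]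

/-- Contraction of two slots: summing over the common colour of `a` and `b`, a matching pairs `a`
either with `b` (contributing `card α`) or with one of the other `card ι - 2` points. -/
lemma sum_pairingCount_insertPair_self [Fintype α] (hab : a ≠ b)
    (j : {x // x ≠ a ∧ x ≠ b} → α) :
    ∑ c, pairingCount (insertPair a b c c j) =
      (Fintype.card α + (Fintype.card ι - 2)) * pairingCount j := by
  have hb : b ∈ univ.erase a := mem_erase.2 ⟨hab.symm, mem_univ b⟩
  simp only [pairingCount_eq_sum a (insertPair a b _ _ j)]
  rw [sum_comm, ← add_sum_erase _ _ hb]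
  have hother : ∀ b' ∈ (univ.erase a).erase b,
      (∑ c, if insertPair a b c c j a = insertPair a b c c j b' then
        pairingCount (fun x : {x // x ≠ a ∧ x ≠ b'} => insertPair a b c c j x) else 0) =
      pairingCount j := by
    intro b' hb'
    have hb'b := ne_of_mem_erase hb'
    have hb'a := ne_of_mem_erase (mem_of_mem_erase hb')
    have hval : ∀ c, insertPair a b c c j b' = j ⟨b', hb'a, hb'b⟩ :=
      fun c => insertPair_val (x := ⟨b', hb'a, hb'b⟩) c c j
    simp only [insertPair_left, hval, sum_ite_eq', mem_univ, if_true]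
    exact pairingCount_insertPair_restrict hab hb'a hb'b j
  rw [sum_congr rfl hother]
  simp [hab, card_erase_of_mem hb, add_mul, Nat.sub_sub]

theorem sum_pairingCount_mul_prod [Fintype α] {R : Type*} [CommSemiring R] (k : ℕ)
    (hι : Fintype.card ι = 2 * k) (x : α → R) :
    ∑ i : ι → α, (pairingCount i : R) * ∏ j, x (i j) =
      (∏ m ∈ range k, (2 * m + 1) : ℕ) * (∑ c, x c ^ 2) ^ k := by
  induction k generalizing ι with
  | zero =>
    have : IsEmpty ι := Fintype.card_eq_zero_iff.1 hι
    simp [pairingCount_of_isEmpty]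
  | succ k ih =>
    obtain ⟨a⟩ : Nonempty ι := Fintype.card_pos_iff.1 (by omega)
    rw [sum_pairingCount_mul a]
    have hb : ∀ b ∈ univ.erase a, ∑ c, ∑ j : {x // x ≠ a ∧ x ≠ b} → α,
        (pairingCount j : R) * ∏ y, x (insertPair a b c c j y) =
        (∑ c, x c ^ 2) * ((∏ m ∈ range k, (2 * m + 1) : ℕ) * (∑ c, x c ^ 2) ^ k) := by
      intro b hb
      have hab := (ne_of_mem_erase hb).symm
      have hcard : Fintype.card {x // x ≠ a ∧ x ≠ b} = 2 * k := by
        rw [card_subtype_ne_and_ne hab, hι]; omega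
      rw [← ih hcard, sum_mul_sum]
      simp only [prod_insertPair hab]
      exact sum_congr rfl fun c _ => sum_congr rfl fun j _ => by ring
    rw [sum_congr rfl hb, sum_const, card_erase_of_mem (mem_univ a), card_univ, hι,
      show 2 * (k + 1) - 1 = 2 * k + 1 by omega]
    push_cast [prod_range_succ, nsmul_eq_mul]
    ring

theorem sum_pairingCount_sq [Fintype α] (k : ℕ) (hι : Fintype.card ι = 2 * k) :
    ∑ i : ι → α, pairingCount i ^ 2 =
      (∏ m ∈ range k, (2 * m + 1)) * ∏ m ∈ range k, (Fintype.card α + 2 * m) := by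
  induction k generalizing ι with
  | zero =>
    have : IsEmpty ι := Fintype.card_eq_zero_iff.1 hι
    simp [pairingCount_of_isEmpty]
  | succ k ih =>
    obtain ⟨a⟩ : Nonempty ι := Fintype.card_pos_iff.1 (by omega)
    have hsplit := sum_pairingCount_mul (R := ℕ) a fun i : ι → α => pairingCount i
    simp only [Nat.cast_id, ← sq] at hsplit
    rw [hsplit]
    have hb : ∀ b ∈ univ.erase a, ∑ c, ∑ j : {x // x ≠ a ∧ x ≠ b} → α,
        pairingCount j * pairingCount (insertPair a b c c j) =
        (Fintype.card α + 2 * k) *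
          ((∏ m ∈ range k, (2 * m + 1)) * ∏ m ∈ range k, (Fintype.card α + 2 * m)) := by
      intro b hb
      have hab := (ne_of_mem_erase hb).symm
      have hcard : Fintype.card {x // x ≠ a ∧ x ≠ b} = 2 * k := by
        rw [card_subtype_ne_and_ne hab, hι]; omega
      rw [← ih hcard, sum_comm, mul_sum]
      refine sum_congr rfl fun j _ => ?_
      rw [← mul_sum, sum_pairingCount_insertPair_self hab, hι]
      rw [show 2 * (k + 1) - 2 = 2 * k by omega]
      ring
    rw [sum_congr rfl hb, sum_const, card_erase_of_mem (mem_univ a), card_univ, hι,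
      show 2 * (k + 1) - 1 = 2 * k + 1 by omega, smul_eq_mul, prod_range_succ, prod_range_succ]
    ring

end Pairings

section Tensors

variable {ι κ : Type*} [Fintype ι] [Fintype κ]

variable (ι) in
def tensorPower (v : EuclideanSpace ℝ κ) : EuclideanSpace ℝ (ι → κ) :=
  WithLp.toLp 2 fun i => ∏ j, v (i j)

lemma inner_tensorPower [DecidableEq ι] (v w : EuclideanSpace ℝ κ) :
    ⟪tensorPower ι v, tensorPower ι w⟫ = ⟪v, w⟫ ^ Fintype.card ι := by
  simp only [tensorPower, PiLp.inner_apply, RCLike.inner_apply, conj_trivial]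
  rw [← card_univ, ← prod_const, Fintype.prod_sum]
  simp only [prod_mul_distrib]

variable (ι κ) in
def pairingTensor [DecidableEq ι] [DecidableEq κ] : EuclideanSpace ℝ (ι → κ) :=
  WithLp.toLp 2 fun i => (pairingCount i : ℝ)

variable [DecidableEq ι] [DecidableEq κ]

lemma inner_pairingTensor_tensorPower {k : ℕ} (hι : Fintype.card ι = 2 * k)
    (v : EuclideanSpace ℝ κ) :
    ⟪pairingTensor ι κ, tensorPower ι v⟫ = (∏ m ∈ range k, (2 * m + 1) : ℕ) * ‖v‖ ^ (2 * k) := by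
  simp only [pairingTensor, tensorPower, PiLp.inner_apply, RCLike.inner_apply, conj_trivial]
  have hv : ‖v‖ ^ 2 = ∑ c, v c ^ 2 := by
    simp [EuclideanSpace.norm_sq_eq]
  rw [pow_mul, hv, ← sum_pairingCount_mul_prod k hι]
  simp only [mul_comm]

lemma inner_pairingTensor_self {k : ℕ} (hι : Fintype.card ι = 2 * k) :
    ⟪pairingTensor ι κ, pairingTensor ι κ⟫ =
      (∏ m ∈ range k, (2 * m + 1) : ℕ) * (∏ m ∈ range k, (Fintype.card κ + 2 * m) : ℕ) := by
  simp only [pairingTensor, PiLp.inner_apply, RCLike.inner_apply, conj_trivial]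
  rw [← Nat.cast_mul, ← sum_pairingCount_sq k hι]
  push_cast [sq]
  rfl

lemma eq_smul_of_real_inner_self_mul_inner_self_eq {E : Type*} [NormedAddCommGroup E]
    [InnerProductSpace ℝ E] {v s : E} (hs : ⟪s, s⟫ ≠ 0) (h : ⟪v, v⟫ * ⟪s, s⟫ = ⟪v, s⟫ ^ 2) :
    v = (⟪v, s⟫ / ⟪s, s⟫) • s := by
  rw [← sub_eq_zero, ← inner_self_eq_zero (𝕜 := ℝ)]
  simp only [inner_sub_left, inner_sub_right, real_inner_smul_left, real_inner_smul_right,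
    real_inner_comm v s]
  field_simp
  linear_combination h

end Tensors

lemma sum_inner_pow_eq_of_sum_sum_inner_pow_eq {d L : ℕ} (hd : 1 ≤ d) (hL : L ≠ 0)
    (u : Fin L → EuclideanSpace ℝ (Fin d)) (hu : ∀ ℓ, ‖u ℓ‖ = 1) (k : ℕ)
    (h : (1 / (L : ℝ) ^ 2) * ∑ ℓ, ∑ ℓ', ⟪u ℓ, u ℓ'⟫ ^ (2 * k) = designConst d k)
    (x : EuclideanSpace ℝ (Fin d)) :
    (1 / (L : ℝ)) * ∑ ℓ, ⟪x, u ℓ⟫ ^ (2 * k) = designConst d k * ‖x‖ ^ (2 * k) := by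
  have hcard : Fintype.card (Fin (2 * k)) = 2 * k := Fintype.card_fin _
  set V := (1 / (L : ℝ)) • ∑ ℓ, tensorPower (Fin (2 * k)) (u ℓ)
  set S := pairingTensor (Fin (2 * k)) (Fin d)
  set D : ℝ := ((∏ m ∈ range k, (2 * m + 1) : ℕ) : ℝ) with hD_def
  set P : ℝ := ((∏ m ∈ range k, (d + 2 * m) : ℕ) : ℝ)
  have hD : D ≠ 0 := by positivity
  have hP : P ≠ 0 := by
    simp only [P, Nat.cast_ne_zero, prod_ne_zero_iff]
    omega
  have hc : designConst d k = D / P := by simp [designConst, D, P]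
  have hVV : ⟪V, V⟫ = (1 / (L : ℝ) ^ 2) * ∑ ℓ, ∑ ℓ', ⟪u ℓ, u ℓ'⟫ ^ (2 * k) := by
    simp only [V, real_inner_smul_left, real_inner_smul_right, sum_inner, inner_sum,
      inner_tensorPower, hcard]
    rw [← mul_sum, sum_comm]
    ring
  have hVS : ⟪V, S⟫ = D := by
    rw [real_inner_comm]
    simp only [V, S, real_inner_smul_right, inner_sum, inner_pairingTensor_tensorPower hcard, hu,
      one_pow, mul_one, ← hD_def, sum_const, card_univ, Fintype.card_fin, nsmul_eq_mul]
    field_simp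
  have hSS : ⟪S, S⟫ = D * P := by
    rw [inner_pairingTensor_self hcard, Fintype.card_fin]
  have hV : V = (1 / P) • S := calc
    V = (⟪V, S⟫ / ⟪S, S⟫) • S := eq_smul_of_real_inner_self_mul_inner_self_eq
      (by rw [hSS]; exact mul_ne_zero hD hP) (by rw [hVV, h, hVS, hSS, hc]; field_simp)
    _ = (1 / P) • S := by rw [hVS, hSS]; field_simp
  have hVx : ⟪V, tensorPower _ x⟫ = (1 / (L : ℝ)) * ∑ ℓ, ⟪x, u ℓ⟫ ^ (2 * k) := by
    simp only [V, real_inner_smul_left, sum_inner, inner_tensorPower, hcard, real_inner_comm x]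
  rw [← hVx, hV, real_inner_smul_left, inner_pairingTensor_tensorPower hcard, hc]
  ring

/-- For unit vectors `u_1, …, u_L` in `ℝ^d`, condition (b) of
Proposition 2.1 is equivalent to condition (c). -/
theorem stmt_1 (d t L : ℕ) (hd : 1 ≤ d) (hL : 1 ≤ L)
    (u : Fin L → EuclideanSpace ℝ (Fin d)) (hu : ∀ ℓ, ‖u ℓ‖ = 1) :
    (∀ k, 1 ≤ k → k ≤ t → ∀ x : EuclideanSpace ℝ (Fin d),
        (1 / (L : ℝ)) * ∑ ℓ, ⟪x, u ℓ⟫ ^ (2 * k) = designConst d k * ‖x‖ ^ (2 * k))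
    ↔ (∀ k, 1 ≤ k → k ≤ t →
        (1 / (L : ℝ) ^ 2) * ∑ ℓ, ∑ ℓ', ⟪u ℓ, u ℓ'⟫ ^ (2 * k) = designConst d k) := by
  have hL0 : (L : ℝ) ≠ 0 := Nat.cast_ne_zero.2 (by omega)
  refine ⟨fun hb k hk hkt => ?_, fun hc k hk hkt =>
    sum_inner_pow_eq_of_sum_sum_inner_pow_eq hd (by omega) u hu k (hc k hk hkt)⟩
  have hrow : ∀ ℓ, ∑ ℓ', ⟪u ℓ, u ℓ'⟫ ^ (2 * k) = L * designConst d k := fun ℓ => by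
    have hbu := hb k hk hkt (u ℓ)
    rw [hu, one_pow, mul_one] at hbu
    field_simp at hbu
    exact hbu
  simp only [hrow, sum_const, card_univ, Fintype.card_fin, nsmul_eq_mul]
  field_simp
end

section
/- Let d be an even positive integer. Suppose that for each b ∈ {1, …, d/2+1}, the vectors {u_{b,i}}_{i∈[d]} form an orthonormal basis of ℝ^d, and that for all b ≠ b' and all i, j ∈ [d], ⟨u_{b,i}, u_{b',j}⟩² = 1/d (i.e., the bases are pairwise unbiased). Then the collection {u_{b,i}}_{b∈[d/2+1], i∈[d]} of L = d(d/2+1) unit vectors forms a projective 2-design for ℝ^d; that is, (1/L²)·∑_{(b,i)}∑_{(b',j)} ⟨u_{b,i}, u_{b',j}⟩² = 1/d and (1/L²)·∑_{(b,i)}∑_{(b',j)} ⟨u_{b,i}, u_{b',j}⟩⁴ = 3/(d(d+2)). -/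
open RealInnerProductSpace

/-!
Within one orthonormal basis the Gram entries are `0` or `1`, and across two unbiased bases every
squared entry equals `1/d`. Hence for `m` pairwise unbiased bases in dimension `d` the sum of the
`2k`-th powers of all Gram entries is `m d (1 + (m - 1) d^{1-k})`. For `k = 1, 2` and
`m = d/2 + 1` the normalized sums are `1/d` and `3/(d(d+2))`.
-/

section MutuallyUnbiased

variable {E : Type*} [NormedAddCommGroup E] [InnerProductSpace ℝ E] {ι β : Type*} [Fintype ι]

theorem Orthonormal.sum_inner_pow {v : ι → E} (hv : Orthonormal ℝ v) (i : ι) {n : ℕ}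
    (hn : n ≠ 0) : ∑ j, ⟪v i, v j⟫ ^ n = 1 := by
  classical
  simp [orthonormal_iff_ite.mp hv, apply_ite (· ^ n), zero_pow hn]

theorem sum_inner_pow_of_forall_inner_sq_eq {x : E} {v : ι → E}
    (h : ∀ j, ⟪x, v j⟫ ^ 2 = 1 / Fintype.card ι) (k : ℕ) :
    ∑ j, ⟪x, v j⟫ ^ (2 * k) = Fintype.card ι * (1 / Fintype.card ι : ℝ) ^ k := by
  simp [pow_mul, h]

theorem sum_sum_inner_pow_of_unbiased [Fintype β] (u : β → ι → E)
    (horth : ∀ b, Orthonormal ℝ (u b))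
    (hunb : ∀ b b', b ≠ b' → ∀ i j, ⟪u b i, u b' j⟫ ^ 2 = 1 / Fintype.card ι)
    {k : ℕ} (hk : k ≠ 0) :
    ∑ b, ∑ i, ∑ b', ∑ j, ⟪u b i, u b' j⟫ ^ (2 * k) =
      Fintype.card β * Fintype.card ι *
        (1 + (Fintype.card β - 1) * (Fintype.card ι * (1 / Fintype.card ι : ℝ) ^ k)) := by
  classical
  set c : ℝ := Fintype.card ι * (1 / Fintype.card ι : ℝ) ^ k
  have hrow : ∀ b i b', ∑ j, ⟪u b i, u b' j⟫ ^ (2 * k) = c + if b = b' then 1 - c else 0 := by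
    intro b i b'
    split_ifs with h
    · subst h
      rw [(horth b).sum_inner_pow i (by positivity)]
      ring
    · rw [sum_inner_pow_of_forall_inner_sq_eq (hunb b b' h i), add_zero]
  simp only [hrow, Finset.sum_add_distrib, Finset.sum_ite_eq, Finset.mem_univ, if_true,
    Finset.sum_const, Finset.card_univ, nsmul_eq_mul]
  ring

end MutuallyUnbiased

theorem stmt_2_general (d : ℕ) (hde : Even d)
    (u : Fin (d / 2 + 1) → Fin d → EuclideanSpace ℝ (Fin d))
    (horth : ∀ b, Orthonormal ℝ (u b))
    (hunb : ∀ b b', b ≠ b' → ∀ i j, ⟪u b i, u b' j⟫ ^ 2 = 1 / (d : ℝ)) :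
    (1 / ((d * (d / 2 + 1) : ℕ) : ℝ) ^ 2) *
        ∑ b, ∑ i, ∑ b', ∑ j, ⟪u b i, u b' j⟫ ^ 2 = 1 / (d : ℝ) ∧
    (1 / ((d * (d / 2 + 1) : ℕ) : ℝ) ^ 2) *
        ∑ b, ∑ i, ∑ b', ∑ j, ⟪u b i, u b' j⟫ ^ 4 = 3 / ((d : ℝ) * ((d : ℝ) + 2)) := by
  obtain ⟨k, rfl⟩ := hde
  rcases Nat.eq_zero_or_pos k with rfl | hk
  · simp
  have hunb' : ∀ b b', b ≠ b' → ∀ i j, ⟪u b i, u b' j⟫ ^ 2 = 1 / Fintype.card (Fin (k + k)) := by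
    simpa using hunb
  have h2 := sum_sum_inner_pow_of_unbiased u horth hunb' one_ne_zero
  have h4 := sum_sum_inner_pow_of_unbiased u horth hunb' two_ne_zero
  simp only [mul_one, Fintype.card_fin] at h2 h4
  rw [h2, h4, show (k + k) / 2 = k by omega]
  have hk : (0 : ℝ) < k := by exact_mod_cast hk
  push_cast
  constructor <;> field_simp <;> ring

/-- A family of `d/2 + 1` pairwise unbiased orthonormal bases of `ℝ^d`
(for `d` even and positive) forms a projective 2-design with `L = d(d/2+1)` vectors:
the second and fourth inner-product moments match `c_{d,1} = 1/d` and
`c_{d,2} = 3/(d(d+2))` respectively. -/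
theorem stmt_2 (d : ℕ) (hd : 0 < d) (hde : Even d)
    (u : Fin (d / 2 + 1) → Fin d → EuclideanSpace ℝ (Fin d))
    (horth : ∀ b, Orthonormal ℝ (u b))
    (hunb : ∀ b b', b ≠ b' → ∀ i j, ⟪u b i, u b' j⟫ ^ 2 = 1 / (d : ℝ)) :
    (1 / ((d * (d / 2 + 1) : ℕ) : ℝ) ^ 2) *
        ∑ b, ∑ i, ∑ b', ∑ j, ⟪u b i, u b' j⟫ ^ 2 = 1 / (d : ℝ) ∧
    (1 / ((d * (d / 2 + 1) : ℕ) : ℝ) ^ 2) *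
        ∑ b, ∑ i, ∑ b', ∑ j, ⟪u b i, u b' j⟫ ^ 4 = 3 / ((d : ℝ) * ((d : ℝ) + 2)) :=
  stmt_2_general d hde u horth hunb
end

section
/- Let d ≥ n ≥ 1, let {u_ℓ}_{ℓ∈[L]} be a projective 2-design for ℝ^d, let Π : ℝ^d → ℝ^n denote the projection onto the first n coordinates, and let Π* : ℝ^n → ℝ^d be its adjoint. Then for every a ∈ ℝ^n and every unit vector x ∈ ℝ^n, the variance of the random variable Y := d·⟨Π*a, u⟩·⟨u, Π*x⟩ (where u is uniformly distributed over {u_ℓ : ℓ ∈ [L]}) satisfies Var(Y) = (1/L)·∑_ℓ (d·⟨Π*a, u_ℓ⟩·⟨u_ℓ, Π*x⟩)² − ⟨a, x⟩² ≤ 2·‖a‖². -/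
/-!
Polarizing the fourth-moment identity of the design gives the mixed moment
`(1/L) ∑ ⟨a,u⟩²⟨x,u⟩² = (‖a‖²‖x‖² + 2⟨a,x⟩²) / (d(d+2))`. Since `Π*` is an isometry,
`E[Y²] = d (‖a‖² + 2⟨a,x⟩²) / (d+2) ≤ ‖a‖² + 2⟨a,x⟩²`, and Cauchy–Schwarz bounds
`E[Y²] - ⟨a,x⟩²` by `2‖a‖²`.
-/

open RealInnerProductSpace

section MixedMoment

variable {E : Type*} [NormedAddCommGroup E] [InnerProductSpace ℝ E] {ι : Type*} [Fintype ι]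

theorem sum_inner_sq_mul_inner_sq_polarization (u : ι → E) (a x : E) :
    12 * ∑ i, ⟪a, u i⟫ ^ 2 * ⟪x, u i⟫ ^ 2 =
      ∑ i, ⟪a + x, u i⟫ ^ 4 + ∑ i, ⟪a - x, u i⟫ ^ 4
        - 2 * ∑ i, ⟪a, u i⟫ ^ 4 - 2 * ∑ i, ⟪x, u i⟫ ^ 4 := by
  simp only [Finset.mul_sum, ← Finset.sum_add_distrib, ← Finset.sum_sub_distrib]
  refine Finset.sum_congr rfl fun i _ => ?_
  rw [inner_add_left, inner_sub_left]
  ring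

theorem mean_inner_sq_mul_inner_sq_of_fourth_moment (u : ι → E) (c κ : ℝ)
    (h4 : ∀ y : E, c * ∑ i, ⟪y, u i⟫ ^ 4 = 3 * κ * ‖y‖ ^ 4) (a x : E) :
    c * ∑ i, ⟪a, u i⟫ ^ 2 * ⟪x, u i⟫ ^ 2 = κ * (‖a‖ ^ 2 * ‖x‖ ^ 2 + 2 * ⟪a, x⟫ ^ 2) := by
  have hp := congrArg (· ^ 2) (norm_add_sq_real a x)
  have hm := congrArg (· ^ 2) (norm_sub_sq_real a x)
  linear_combination c / 12 * sum_inner_sq_mul_inner_sq_polarization u a x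
    + (h4 (a + x) + h4 (a - x) - 2 * h4 a - 2 * h4 x) / 12 + κ / 4 * (hp + hm)

end MixedMoment

theorem inner_map_eq_inner_of_apply_eq_dite {n d : ℕ} (hnd : n ≤ d)
    (emb : EuclideanSpace ℝ (Fin n) → EuclideanSpace ℝ (Fin d))
    (hemb : ∀ (a : EuclideanSpace ℝ (Fin n)) (i : Fin d),
      emb a i = if h : (i : ℕ) < n then a ⟨i, h⟩ else 0)
    (a b : EuclideanSpace ℝ (Fin n)) : ⟪emb a, emb b⟫ = ⟪a, b⟫ := by
  obtain ⟨k, rfl⟩ := Nat.exists_eq_add_of_le hnd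
  simp only [PiLp.inner_apply, RCLike.inner_apply, conj_trivial]
  rw [Fin.sum_trunc _ fun j => by simp [hemb]]
  simp [hemb]

theorem stmt_4_general (d n L : ℕ) (hnd : n ≤ d)
    (u : Fin L → EuclideanSpace ℝ (Fin d))
    (h4 : ∀ x : EuclideanSpace ℝ (Fin d),
      (1 / (L : ℝ)) * ∑ ℓ, ⟪x, u ℓ⟫ ^ 4 = 3 * ‖x‖ ^ 4 / ((d : ℝ) * ((d : ℝ) + 2)))
    (emb : EuclideanSpace ℝ (Fin n) → EuclideanSpace ℝ (Fin d))
    (hemb : ∀ (a : EuclideanSpace ℝ (Fin n)) (i : Fin d),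
      emb a i = if h : (i : ℕ) < n then a ⟨i, h⟩ else 0)
    (a x : EuclideanSpace ℝ (Fin n)) (hx : ‖x‖ = 1) :
    (1 / (L : ℝ)) * (∑ ℓ, ((d : ℝ) * ⟪emb a, u ℓ⟫ * ⟪u ℓ, emb x⟫) ^ 2) - ⟪a, x⟫ ^ 2
      ≤ 2 * ‖a‖ ^ 2 := by
  have hinner := inner_map_eq_inner_of_apply_eq_dite hnd emb hemb
  have hnorm (b : EuclideanSpace ℝ (Fin n)) : ‖emb b‖ ^ 2 = ‖b‖ ^ 2 := by
    rw [← real_inner_self_eq_norm_sq, ← real_inner_self_eq_norm_sq, hinner]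
  have hmoment := mean_inner_sq_mul_inner_sq_of_fourth_moment u _ (1 / ((d : ℝ) * (d + 2)))
    (fun y => (h4 y).trans (by ring)) (emb a) (emb x)
  rw [hnorm, hnorm, hinner, hx, one_pow, mul_one] at hmoment
  have hdim : (d : ℝ) ^ 2 * (1 / (d * (d + 2))) ≤ 1 := by
    rw [mul_one_div]
    exact div_le_one_of_le₀ (by nlinarith) (by positivity)
  have hcs : ⟪a, x⟫ ^ 2 ≤ ‖a‖ ^ 2 := by
    simpa [sq, hx] using real_inner_mul_inner_self_le a x
  have hsum : ∑ ℓ, ((d : ℝ) * ⟪emb a, u ℓ⟫ * ⟪u ℓ, emb x⟫) ^ 2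
      = (d : ℝ) ^ 2 * ∑ ℓ, ⟪emb a, u ℓ⟫ ^ 2 * ⟪emb x, u ℓ⟫ ^ 2 := by
    rw [Finset.mul_sum]
    refine Finset.sum_congr rfl fun ℓ _ => ?_
    rw [real_inner_comm (emb x) (u ℓ)]
    ring
  calc (1 / (L : ℝ)) * (∑ ℓ, ((d : ℝ) * ⟪emb a, u ℓ⟫ * ⟪u ℓ, emb x⟫) ^ 2) - ⟪a, x⟫ ^ 2
      = (d : ℝ) ^ 2 * (1 / (d * (d + 2))) * (‖a‖ ^ 2 + 2 * ⟪a, x⟫ ^ 2) - ⟪a, x⟫ ^ 2 := by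
        rw [hsum]
        linear_combination (d : ℝ) ^ 2 * hmoment
    _ ≤ 1 * (‖a‖ ^ 2 + 2 * ⟪a, x⟫ ^ 2) - ⟪a, x⟫ ^ 2 := by gcongr
    _ ≤ 2 * ‖a‖ ^ 2 := by linarith

/-- For a projective 2-design `{u_ℓ}` in `ℝ^d`, the embedding `Π*` of
`ℝ^n` into the first `n` coordinates of `ℝ^d` (`d ≥ n`), any `a ∈ ℝ^n`, and any unit
vector `x ∈ ℝ^n`, the variance of `Y = d·⟨Π*a, u⟩·⟨u, Π*x⟩` (with `u` uniform over
`{u_ℓ}`), namely `(1/L)·∑_ℓ (d·⟨Π*a, u_ℓ⟩·⟨u_ℓ, Π*x⟩)² − ⟨a,x⟩²`, is at most `2‖a‖²`. -/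
theorem stmt_4 (d n L : ℕ) (hn : 1 ≤ n) (hnd : n ≤ d) (hL : 1 ≤ L)
    (u : Fin L → EuclideanSpace ℝ (Fin d)) (hu : ∀ ℓ, ‖u ℓ‖ = 1)
    (h2 : ∀ x : EuclideanSpace ℝ (Fin d),
      (1 / (L : ℝ)) * ∑ ℓ, ⟪x, u ℓ⟫ ^ 2 = ‖x‖ ^ 2 / d)
    (h4 : ∀ x : EuclideanSpace ℝ (Fin d),
      (1 / (L : ℝ)) * ∑ ℓ, ⟪x, u ℓ⟫ ^ 4 = 3 * ‖x‖ ^ 4 / ((d : ℝ) * ((d : ℝ) + 2)))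
    (emb : EuclideanSpace ℝ (Fin n) → EuclideanSpace ℝ (Fin d))
    (hemb : ∀ (a : EuclideanSpace ℝ (Fin n)) (i : Fin d),
      emb a i = if h : (i : ℕ) < n then a ⟨i, h⟩ else 0)
    (a x : EuclideanSpace ℝ (Fin n)) (hx : ‖x‖ = 1) :
    (1 / (L : ℝ)) * (∑ ℓ, ((d : ℝ) * ⟪emb a, u ℓ⟫ * ⟪u ℓ, emb x⟫) ^ 2) - ⟪a, x⟫ ^ 2
      ≤ 2 * ‖a‖ ^ 2 :=
  stmt_4_general d n L hnd u h4 emb hemb a x hx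
end

section
/- Let d ≥ 1, let u be uniformly distributed on the unit sphere S^{d-1} ⊆ ℝ^d, let a ∈ ℝ^d, and let x ∈ ℝ^d be a unit vector. Then E[(d·⟨a, u⟩·⟨u, x⟩)²] = (3d/(d+2))·⟨a, x⟩² + (d/(d+2))·(‖a‖² − ⟨a, x⟩²); consequently, since E[d·⟨a, u⟩·⟨u, x⟩] = ⟨a, x⟩, the variance of d·⟨a, u⟩·⟨u, x⟩ equals 2⟨a, x⟩²·(d−1)/(d+2) + (‖a‖² − ⟨a, x⟩²)·d/(d+2), which is at most 2‖a‖². -/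
/-!
Rotation invariance makes `∫ ⟪a, v⟫ ^ n ∂σ` depend on `a` only through `‖a‖`, since a reflection
carries `a` to any vector of the same norm; hence it equals `‖a‖ ^ n * mₙ`. Polarizing the
quadratic form `‖a‖ ^ 2 * m₂` and the quartic form `‖a‖ ^ 4 * m₄` gives
`∫ ⟪a, v⟫ * ⟪b, v⟫ = ⟪a, b⟫ * m₂` and `3 * ∫ ⟪a, v⟫ ^ 2 * ⟪b, v⟫ ^ 2 = (‖a‖²‖b‖² + 2⟪a, b⟫²) * m₄`.
Summing over an orthonormal basis `(bᵢ)`, with `∑ᵢ ⟪bᵢ, v⟫ ^ 2 = 1` on the sphere, yields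
`d * m₂ = 1` and `d * (d + 2) * m₄ = 3`. The mean and second moment of `d⟪a, u⟫⟪u, x⟫`
are then read off, and the variance bound is Cauchy–Schwarz.
-/

open MeasureTheory RealInnerProductSpace Metric Module

lemma Continuous.integrable_of_compactSpace {X F : Type*} [TopologicalSpace X] [CompactSpace X]
    [MeasurableSpace X] [OpensMeasurableSpace X] [NormedAddCommGroup F] {μ : Measure X}
    [IsFiniteMeasure μ] {f : X → F} (hf : Continuous f) : Integrable f μ :=
  hf.integrable_of_hasCompactSupport (.of_compactSpace f)

section

variable {E : Type*} [NormedAddCommGroup E] [InnerProductSpace ℝ E] [FiniteDimensional ℝ E]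
  [MeasurableSpace E] [BorelSpace E]

def RotationInvariant (σ : Measure (sphere (0 : E) 1)) : Prop :=
  ∀ Q : E ≃ₗᵢ[ℝ] E, MeasurePreserving
    (fun v : sphere (0 : E) 1 => (⟨Q v, by
        rw [mem_sphere_zero_iff_norm, Q.norm_map, ← mem_sphere_zero_iff_norm]
        exact v.2⟩ : sphere (0 : E) 1)) σ σ

namespace RotationInvariant

variable {σ : Measure (sphere (0 : E) 1)}

lemma integral_inner_pow_eq_of_norm_eq (hσ : RotationInvariant σ) {a b : E} (hab : ‖a‖ = ‖b‖)
    (n : ℕ) : ∫ v, ⟪a, v⟫ ^ n ∂σ = ∫ v, ⟪b, v⟫ ^ n ∂σ := by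
  set R := (ℝ ∙ (a - b))ᗮ.reflection
  have hR : ∀ v : E, ⟪a, R v⟫ = ⟪b, v⟫ := fun v => by
    rw [← Submodule.reflection_sub hab, ← R.inner_map_map, Submodule.reflection_reflection]
  have hmap := (hσ R).map_eq
  conv_lhs => rw [← hmap]
  rw [integral_map (hσ R).aemeasurable
    (Continuous.aestronglyMeasurable_of_compactSpace (by fun_prop))]
  simp only [hR]

lemma integral_inner_pow_eq_norm_pow_mul (hσ : RotationInvariant σ) {e : E} (he : ‖e‖ = 1)
    (a : E) (n : ℕ) : ∫ v, ⟪a, v⟫ ^ n ∂σ = ‖a‖ ^ n * ∫ v, ⟪e, v⟫ ^ n ∂σ := by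
  have : ‖a‖ = ‖‖a‖ • e‖ := by simp [norm_smul, he]
  simp only [hσ.integral_inner_pow_eq_of_norm_eq this, real_inner_smul_left, mul_pow,
    integral_const_mul]

variable [IsProbabilityMeasure σ]

lemma finrank_mul_integral_inner_sq (hσ : RotationInvariant σ) (a : E) :
    finrank ℝ E * ∫ v, ⟪a, v⟫ ^ 2 ∂σ = ‖a‖ ^ 2 := by
  set b := stdOrthonormalBasis ℝ E
  have hsum : ∑ i, ∫ v, ⟪b i, v⟫ ^ 2 ∂σ = 1 := by
    rw [← integral_finsetSum _ fun i _ => Continuous.integrable_of_compactSpace (by fun_prop)]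
    simp [b.sum_sq_inner_right, norm_eq_of_mem_sphere]
  calc finrank ℝ E * ∫ v, ⟪a, v⟫ ^ 2 ∂σ
      = ∑ i, ‖a‖ ^ 2 * ∫ v, ⟪b i, v⟫ ^ 2 ∂σ := by
        simp [← hσ.integral_inner_pow_eq_norm_pow_mul (b.orthonormal.1 _)]
    _ = ‖a‖ ^ 2 := by rw [← Finset.mul_sum, hsum, mul_one]

lemma finrank_mul_integral_inner_mul_inner (hσ : RotationInvariant σ) (a b : E) :
    finrank ℝ E * ∫ v, ⟪a, v⟫ * ⟪b, v⟫ ∂σ = ⟪a, b⟫ := by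
  have hpol : ∫ v, ⟪a, v⟫ * ⟪b, v⟫ ∂σ
      = (∫ v, ⟪a + b, v⟫ ^ 2 ∂σ - ∫ v, ⟪a - b, v⟫ ^ 2 ∂σ) / 4 := by
    rw [← integral_sub (Continuous.integrable_of_compactSpace (by fun_prop))
      (Continuous.integrable_of_compactSpace (by fun_prop)), ← integral_div]
    congr 1 with v
    simp only [inner_add_left, inner_sub_left]
    ring
  rw [hpol, mul_div_assoc', mul_sub, hσ.finrank_mul_integral_inner_sq,
    hσ.finrank_mul_integral_inner_sq, norm_add_sq_real, norm_sub_sq_real]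
  ring

lemma three_mul_integral_inner_sq_mul_inner_sq (hσ : RotationInvariant σ) {e : E} (he : ‖e‖ = 1)
    (a b : E) :
    3 * ∫ v, ⟪a, v⟫ ^ 2 * ⟪b, v⟫ ^ 2 ∂σ
      = (‖a‖ ^ 2 * ‖b‖ ^ 2 + 2 * ⟪a, b⟫ ^ 2) * ∫ v, ⟪e, v⟫ ^ 4 ∂σ := by
  have hpol : ∫ v, ⟪a + b, v⟫ ^ 4 ∂σ + ∫ v, ⟪a - b, v⟫ ^ 4 ∂σ
      = 2 * ∫ v, ⟪a, v⟫ ^ 4 ∂σ + 2 * ∫ v, ⟪b, v⟫ ^ 4 ∂σ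
        + 12 * ∫ v, ⟪a, v⟫ ^ 2 * ⟪b, v⟫ ^ 2 ∂σ := by
    simp only [← integral_const_mul]
    rw [← integral_add (Continuous.integrable_of_compactSpace (by fun_prop))
        (Continuous.integrable_of_compactSpace (by fun_prop)),
      ← integral_add (Continuous.integrable_of_compactSpace (by fun_prop))
        (Continuous.integrable_of_compactSpace (by fun_prop)),
      ← integral_add (Continuous.integrable_of_compactSpace (by fun_prop))
        (Continuous.integrable_of_compactSpace (by fun_prop))]
    congr 1 with v
    simp only [inner_add_left, inner_sub_left]
    ring
  have hplus : ‖a + b‖ ^ 4 = (‖a‖ ^ 2 + 2 * ⟪a, b⟫ + ‖b‖ ^ 2) ^ 2 := by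
    rw [← norm_add_sq_real]; ring
  have hminus : ‖a - b‖ ^ 4 = (‖a‖ ^ 2 - 2 * ⟪a, b⟫ + ‖b‖ ^ 2) ^ 2 := by
    rw [← norm_sub_sq_real]; ring
  rw [hσ.integral_inner_pow_eq_norm_pow_mul he (a + b),
    hσ.integral_inner_pow_eq_norm_pow_mul he (a - b), hσ.integral_inner_pow_eq_norm_pow_mul he a,
    hσ.integral_inner_pow_eq_norm_pow_mul he b, hplus, hminus] at hpol
  linear_combination -hpol / 4

lemma finrank_mul_finrank_add_two_mul_integral_inner_pow_four (hσ : RotationInvariant σ) {e : E}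
    (he : ‖e‖ = 1) :
    finrank ℝ E * (finrank ℝ E + 2) * ∫ v, ⟪e, v⟫ ^ 4 ∂σ = 3 := by
  set b := stdOrthonormalBasis ℝ E
  have hsum : ∑ i, ∫ v, ⟪e, v⟫ ^ 2 * ⟪b i, v⟫ ^ 2 ∂σ = ∫ v, ⟪e, v⟫ ^ 2 ∂σ := by
    rw [← integral_finsetSum _ fun i _ => Continuous.integrable_of_compactSpace (by fun_prop)]
    simp [← Finset.mul_sum, b.sum_sq_inner_right, norm_eq_of_mem_sphere]
  have hterm (i) : 3 * ∫ v, ⟪e, v⟫ ^ 2 * ⟪b i, v⟫ ^ 2 ∂σ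
      = (1 + 2 * ⟪b i, e⟫ ^ 2) * ∫ v, ⟪e, v⟫ ^ 4 ∂σ := by
    rw [hσ.three_mul_integral_inner_sq_mul_inner_sq he, he, b.orthonormal.1 i, real_inner_comm]
    ring
  have h3 : 3 * ∫ v, ⟪e, v⟫ ^ 2 ∂σ = (finrank ℝ E + 2) * ∫ v, ⟪e, v⟫ ^ 4 ∂σ := by
    rw [← hsum, Finset.mul_sum, Finset.sum_congr rfl fun i _ => hterm i, ← Finset.sum_mul,
      Finset.sum_add_distrib, ← Finset.mul_sum, b.sum_sq_inner_right, he]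
    simp
  have h2 := hσ.finrank_mul_integral_inner_sq e
  rw [he] at h2
  linear_combination (finrank ℝ E : ℝ) * h3.symm + 3 * h2

lemma finrank_mul_finrank_add_two_mul_integral_inner_sq_mul_inner_sq (hσ : RotationInvariant σ)
    (a b : E) :
    finrank ℝ E * (finrank ℝ E + 2) * ∫ v, ⟪a, v⟫ ^ 2 * ⟪b, v⟫ ^ 2 ∂σ
      = ‖a‖ ^ 2 * ‖b‖ ^ 2 + 2 * ⟪a, b⟫ ^ 2 := by
  obtain ⟨e⟩ := nonempty_of_isProbabilityMeasure σ
  have he : ‖(e : E)‖ = 1 := norm_eq_of_mem_sphere e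
  linear_combination (finrank ℝ E * (finrank ℝ E + 2) / 3 : ℝ) *
      hσ.three_mul_integral_inner_sq_mul_inner_sq he a b +
    (‖a‖ ^ 2 * ‖b‖ ^ 2 + 2 * ⟪a, b⟫ ^ 2) / 3 *
      hσ.finrank_mul_finrank_add_two_mul_integral_inner_pow_four he

lemma integral_finrank_mul_inner_mul_inner (hσ : RotationInvariant σ) (a x : E) :
    ∫ v, (finrank ℝ E : ℝ) * ⟪a, v⟫ * ⟪(v : E), x⟫ ∂σ = ⟪a, x⟫ := by
  rw [← hσ.finrank_mul_integral_inner_mul_inner a x, ← integral_const_mul]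
  congr 1 with v
  rw [real_inner_comm x]
  ring

lemma integral_finrank_mul_inner_mul_inner_sq (hσ : RotationInvariant σ) (a : E) {x : E}
    (hx : ‖x‖ = 1) :
    ∫ v, ((finrank ℝ E : ℝ) * ⟪a, v⟫ * ⟪(v : E), x⟫) ^ 2 ∂σ
      = 3 * finrank ℝ E / (finrank ℝ E + 2) * ⟪a, x⟫ ^ 2
        + finrank ℝ E / (finrank ℝ E + 2) * (‖a‖ ^ 2 - ⟪a, x⟫ ^ 2) := by
  have hn : (finrank ℝ E : ℝ) ≠ 0 := by
    have h := hσ.finrank_mul_integral_inner_sq x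
    rw [hx, one_pow] at h
    exact left_ne_zero_of_mul_eq_one h
  have h4 := hσ.finrank_mul_finrank_add_two_mul_integral_inner_sq_mul_inner_sq a x
  rw [hx] at h4
  calc _ = (finrank ℝ E : ℝ) ^ 2 * ∫ v, ⟪a, v⟫ ^ 2 * ⟪x, v⟫ ^ 2 ∂σ := by
        rw [← integral_const_mul]
        congr 1 with v
        rw [real_inner_comm x]
        ring
    _ = _ := by
        field_simp
        linear_combination h4

end RotationInvariant

end

/-- For `u` uniformly distributed on the unit sphere `S^{d-1} ⊆ ℝ^d`
(i.e. distributed according to the rotation-invariant probability measure `σ`),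
`a ∈ ℝ^d` and a unit vector `x ∈ ℝ^d`, we have
`E[(d⟨a,u⟩⟨u,x⟩)²] = (3d/(d+2))⟨a,x⟩² + (d/(d+2))(‖a‖² − ⟨a,x⟩²)`; moreover
`E[d⟨a,u⟩⟨u,x⟩] = ⟨a,x⟩`, so the variance of `d⟨a,u⟩⟨u,x⟩` equals
`2⟨a,x⟩²(d−1)/(d+2) + (‖a‖² − ⟨a,x⟩²)·d/(d+2)`, which is at most `2‖a‖²`. -/
theorem stmt_5 (d : ℕ)
    (σ : Measure (Metric.sphere (0 : EuclideanSpace ℝ (Fin d)) 1))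
    [IsProbabilityMeasure σ]
    (hσ : ∀ Q : EuclideanSpace ℝ (Fin d) ≃ₗᵢ[ℝ] EuclideanSpace ℝ (Fin d),
      MeasurePreserving
        (fun v : Metric.sphere (0 : EuclideanSpace ℝ (Fin d)) 1 =>
          (⟨Q v, by
              rw [mem_sphere_zero_iff_norm, Q.norm_map, ← mem_sphere_zero_iff_norm]
              exact v.2⟩ :
            Metric.sphere (0 : EuclideanSpace ℝ (Fin d)) 1)) σ σ)
    (a x : EuclideanSpace ℝ (Fin d)) (hx : ‖x‖ = 1) :
    (∫ v, ((d : ℝ) * ⟪a, (v : EuclideanSpace ℝ (Fin d))⟫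
        * ⟪(v : EuclideanSpace ℝ (Fin d)), x⟫) ^ 2 ∂σ
      = (3 * d / ((d : ℝ) + 2)) * ⟪a, x⟫ ^ 2
        + ((d : ℝ) / ((d : ℝ) + 2)) * (‖a‖ ^ 2 - ⟪a, x⟫ ^ 2)) ∧
    (∫ v, (d : ℝ) * ⟪a, (v : EuclideanSpace ℝ (Fin d))⟫
        * ⟪(v : EuclideanSpace ℝ (Fin d)), x⟫ ∂σ = ⟪a, x⟫) ∧
    ((∫ v, ((d : ℝ) * ⟪a, (v : EuclideanSpace ℝ (Fin d))⟫
        * ⟪(v : EuclideanSpace ℝ (Fin d)), x⟫) ^ 2 ∂σ) - ⟪a, x⟫ ^ 2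
      = 2 * ⟪a, x⟫ ^ 2 * ((d : ℝ) - 1) / ((d : ℝ) + 2)
        + (‖a‖ ^ 2 - ⟪a, x⟫ ^ 2) * (d : ℝ) / ((d : ℝ) + 2)) ∧
    (2 * ⟪a, x⟫ ^ 2 * ((d : ℝ) - 1) / ((d : ℝ) + 2)
        + (‖a‖ ^ 2 - ⟪a, x⟫ ^ 2) * (d : ℝ) / ((d : ℝ) + 2) ≤ 2 * ‖a‖ ^ 2) := by
  replace hσ : RotationInvariant σ := hσ
  have hsecond := hσ.integral_finrank_mul_inner_mul_inner_sq a hx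
  have hmean := hσ.integral_finrank_mul_inner_mul_inner a x
  rw [finrank_euclideanSpace_fin] at hsecond hmean
  refine ⟨hsecond, hmean, ?_, ?_⟩
  · rw [hsecond]
    field_simp
    ring
  · have hcs : ⟪a, x⟫ ^ 2 ≤ ‖a‖ ^ 2 := by
      have h := abs_real_inner_le_norm a x
      rw [hx, mul_one] at h
      exact sq_le_sq.mpr (h.trans (le_abs_self _))
    rw [← add_div, div_le_iff₀ (by positivity)]
    nlinarith [sq_nonneg ⟪a, x⟫]
end

section
/- Let k ∈ ℕ, let M ∈ 𝔽₂^{k×k} be skew-symmetric, and let w ∈ 𝔽₂^k. For p ∈ 𝔽₂^k define the linear operator S_p on ℝ^{𝔽₂^k} by S_p := (−1)^{Q_M(p)+wᵀp}·X_p Z_{Mp}. Then p ↦ S_p is a representation of the additive group 𝔽₂^k: for all p, p' ∈ 𝔽₂^k, S_p ∘ S_{p'} = S_{p+p'}. -/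
/-!
`S_p` sends `f` to `x ↦ (-1)^{φ_p(x)} f(x + p)` with phase
`φ_p(x) = Q_M(p) + wᵀp + (Mp)ᵀ(x + p)`, so the claim is the cocycle identity
`φ_p(x) + φ_{p'}(x + p) = φ_{p+p'}(x)`. Since `M̃ + M̃ᵀ = M`, polarization gives
`Q_M(p + p') = Q_M(p) + Q_M(p') + pᵀMp'`, and this extra term cancels, by symmetry of `M`
and characteristic 2, the cross term `(Mp)ᵀp'` of the modulation.
-/

open Matrix

/-- The quadratic form `Q_M(x) = xᵀ M̃ x` where `M̃` is the strictly upper-triangular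
part of `M`. -/
def Qform (k : ℕ) (M : Matrix (Fin k) (Fin k) (ZMod 2)) (x : Fin k → ZMod 2) : ZMod 2 :=
  x ⬝ᵥ (Matrix.of fun i j : Fin k => if (i : ℕ) < (j : ℕ) then M i j else 0).mulVec x

/-- The translation operator `(X_p f)(x) = f(x + p)` on `ℝ^{𝔽₂^k}`. -/
def Xop (k : ℕ) (p : Fin k → ZMod 2) (f : (Fin k → ZMod 2) → ℝ) :
    (Fin k → ZMod 2) → ℝ :=
  fun x => f (x + p)

/-- The modulation operator `(Z_q f)(x) = (−1)^{qᵀx}·f(x)` on `ℝ^{𝔽₂^k}`. -/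
def Zop (k : ℕ) (q : Fin k → ZMod 2) (f : (Fin k → ZMod 2) → ℝ) :
    (Fin k → ZMod 2) → ℝ :=
  fun x => (-1 : ℝ) ^ (q ⬝ᵥ x).val * f x

/-- The operator `S_p := (−1)^{Q_M(p)+wᵀp}·X_p Z_{Mp}` on `ℝ^{𝔽₂^k}`. -/
noncomputable def Sop (k : ℕ) (M : Matrix (Fin k) (Fin k) (ZMod 2))
    (w : Fin k → ZMod 2) (p : Fin k → ZMod 2) (f : (Fin k → ZMod 2) → ℝ) :
    (Fin k → ZMod 2) → ℝ :=
  fun x => (-1 : ℝ) ^ (Qform k M p + w ⬝ᵥ p).val * Xop k p (Zop k (M.mulVec p) f) x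

lemma neg_one_pow_val_add (a b : ZMod 2) :
    (-1 : ℝ) ^ (a + b).val = (-1 : ℝ) ^ a.val * (-1 : ℝ) ^ b.val := by
  rw [ZMod.val_add, ← neg_one_pow_eq_pow_mod_two, pow_add]

theorem Matrix.add_dotProduct_mulVec_add {ι R : Type*} [Fintype ι] [CommRing R]
    (N : Matrix ι ι R) (x y : ι → R) :
    (x + y) ⬝ᵥ N *ᵥ (x + y) = x ⬝ᵥ N *ᵥ x + y ⬝ᵥ N *ᵥ y + x ⬝ᵥ (N + Nᵀ) *ᵥ y := by
  have hyx : y ⬝ᵥ N *ᵥ x = x ⬝ᵥ Nᵀ *ᵥ y := by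
    rw [mulVec_transpose, dotProduct_mulVec, dotProduct_comm]
  simp only [mulVec_add, add_dotProduct, dotProduct_add, add_mulVec, hyx]
  ring

theorem Matrix.strictUpper_add_transpose {ι R : Type*} [LinearOrder ι] [AddMonoid R]
    (M : Matrix ι ι R) (hdiag : ∀ i, M i i = 0) (hsym : ∀ i j, M i j = M j i) :
    (of fun i j => if i < j then M i j else 0) +
      (of fun i j => if i < j then M i j else 0)ᵀ = M := by
  ext i j
  simp only [add_apply, transpose_apply, of_apply]
  rcases lt_trichotomy i j with h | rfl | h
  · simp [h, not_lt_of_gt h]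
  · simp [hdiag]
  · simp [h, not_lt_of_gt h, hsym i j]

lemma Qform_add (k : ℕ) (M : Matrix (Fin k) (Fin k) (ZMod 2))
    (hdiag : ∀ i, M i i = 0) (hsym : ∀ i j, M i j = M j i) (p p' : Fin k → ZMod 2) :
    Qform k M (p + p') = Qform k M p + Qform k M p' + p ⬝ᵥ M *ᵥ p' := by
  simp only [Qform, add_dotProduct_mulVec_add, ← Fin.lt_def,
    strictUpper_add_transpose M hdiag hsym]

lemma Sop_apply (k : ℕ) (M : Matrix (Fin k) (Fin k) (ZMod 2)) (w p : Fin k → ZMod 2)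
    (f : (Fin k → ZMod 2) → ℝ) (x : Fin k → ZMod 2) :
    Sop k M w p f x =
      (-1 : ℝ) ^ (Qform k M p + w ⬝ᵥ p + M *ᵥ p ⬝ᵥ (x + p)).val * f (x + p) := by
  simp only [Sop, Xop, Zop, neg_one_pow_val_add, mul_assoc]

lemma Sop_phase_add (k : ℕ) (M : Matrix (Fin k) (Fin k) (ZMod 2))
    (hdiag : ∀ i, M i i = 0) (hsym : ∀ i j, M i j = M j i) (w p p' x : Fin k → ZMod 2) :
    (Qform k M p + w ⬝ᵥ p + M *ᵥ p ⬝ᵥ (x + p)) +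
        (Qform k M p' + w ⬝ᵥ p' + M *ᵥ p' ⬝ᵥ (x + p + p')) =
      Qform k M (p + p') + w ⬝ᵥ (p + p') + M *ᵥ (p + p') ⬝ᵥ (x + p + p') := by
  have hMsym : M *ᵥ p ⬝ᵥ p' = p ⬝ᵥ M *ᵥ p' := by
    rw [← vecMul_transpose, dotProduct_mulVec, show Mᵀ = M from ext fun i j => hsym j i]
  have htwo : (2 : ZMod 2) = 0 := rfl
  simp only [Qform_add k M hdiag hsym, mulVec_add, add_dotProduct, dotProduct_add, hMsym]
  linear_combination -(p ⬝ᵥ M *ᵥ p') * htwo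

/-- For a skew-symmetric `M ∈ 𝔽₂^{k×k}` and `w ∈ 𝔽₂^k`, the map
`p ↦ S_p = (−1)^{Q_M(p)+wᵀp}·X_p Z_{Mp}` is a representation of the additive group
`𝔽₂^k`: `S_p ∘ S_{p'} = S_{p+p'}`. -/
theorem stmt_12 (k : ℕ) (M : Matrix (Fin k) (Fin k) (ZMod 2))
    (hdiag : ∀ i, M i i = 0) (hsym : ∀ i j, M i j = M j i)
    (w : Fin k → ZMod 2) :
    ∀ p p' : Fin k → ZMod 2, Sop k M w p ∘ Sop k M w p' = Sop k M w (p + p') := by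
  intro p p'
  funext f x
  rw [Function.comp_apply, Sop_apply, Sop_apply, Sop_apply, ← mul_assoc,
    ← neg_one_pow_val_add, Sop_phase_add k M hdiag hsym, add_assoc x]
end

section
/- Let F be a finite field of characteristic 2, let tr : F → 𝔽₂ denote the field trace onto the prime field, and consider the 𝔽₂-vector space V := F × 𝔽₂ with the bilinear form (x, α)·(y, β) := tr(xy) + αβ. For s ∈ F define the 𝔽₂-linear map L_s : V → V by L_s(x, α) := (s²x + s·tr(sx) + αs, tr(sx)). Then: (i) for every s ∈ F and (x, α) ∈ V, (x, α)·L_s(x, α) = 0; and (ii) for every s ∈ F and (x, α), (y, β) ∈ V, (x, α)·L_s(y, β) = L_s(x, α)·(y, β). -/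
/-!
Expanding both pairings shows that `v · L_s w` is symmetric in `v, w`; this only uses that the
trace is linear. On the diagonal the two halves of the pairing agree up to the identity
`tr((sx)²) = tr(sx)²`, which holds because the Frobenius `z ↦ z²` is an automorphism of `F`
over `𝔽₂` and so preserves the trace, while `t² = t` on `𝔽₂`.
-/

theorem Algebra.trace_pow_card (K L : Type*) [Field K] [Fintype K] [Field L] [Algebra K L]
    [Algebra.IsAlgebraic K L] (x : L) :
    Algebra.trace K L (x ^ Fintype.card K) = Algebra.trace K L x :=
  Algebra.trace_eq_of_algEquiv (FiniteField.frobeniusAlgEquivOfAlgebraic K L) x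

section AugmentedForm

variable {K F : Type*} [CommRing K] [CommRing F] [Algebra K F] (tr : F →ₗ[K] K)

def augForm (v w : F × K) : K := tr (v.1 * w.1) + v.2 * w.2

def augOp (s : F) (v : F × K) : F × K :=
  (s ^ 2 * v.1 + tr (s * v.1) • s + v.2 • s, tr (s * v.1))

theorem augForm_augOp_comm (s : F) (v w : F × K) :
    augForm tr v (augOp tr s w) = augForm tr (augOp tr s v) w := by
  obtain ⟨x, α⟩ := v
  obtain ⟨y, β⟩ := w
  have hx : x * (s ^ 2 * y + tr (s * y) • s + β • s)
      = s ^ 2 * (x * y) + tr (s * y) • (s * x) + β • (s * x) := by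
    simp only [Algebra.smul_def]; ring
  have hy : (s ^ 2 * x + tr (s * x) • s + α • s) * y
      = s ^ 2 * (x * y) + tr (s * x) • (s * y) + α • (s * y) := by
    simp only [Algebra.smul_def]; ring
  simp only [augForm, augOp, hx, hy, map_add, map_smul, smul_eq_mul]
  ring

theorem augForm_augOp_self [CharP K 2] (hsq : ∀ z, tr (z ^ 2) = tr z ^ 2) (s : F) (v : F × K) :
    augForm tr v (augOp tr s v) = 0 := by
  obtain ⟨x, α⟩ := v
  have hx : x * (s ^ 2 * x + tr (s * x) • s + α • s)
      = (s * x) ^ 2 + tr (s * x) • (s * x) + α • (s * x) := by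
    simp only [Algebra.smul_def]; ring
  simp only [augForm, augOp, hx, map_add, map_smul, smul_eq_mul, hsq]
  calc tr (s * x) ^ 2 + tr (s * x) * tr (s * x) + α * tr (s * x) + α * tr (s * x)
      = 2 * (tr (s * x) ^ 2 + α * tr (s * x)) := by ring
    _ = 0 := by rw [CharTwo.two_eq_zero, zero_mul]

end AugmentedForm

theorem stmt_15_general (F : Type*) [Field F] [Fintype F] [Algebra (ZMod 2) F]
    (tr : F → ZMod 2) (htr : ∀ z, tr z = Algebra.trace (ZMod 2) F z)
    (B : (F × ZMod 2) → (F × ZMod 2) → ZMod 2)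
    (hB : ∀ v w : F × ZMod 2, B v w = tr (v.1 * w.1) + v.2 * w.2)
    (Ls : F → (F × ZMod 2) → (F × ZMod 2))
    (hLs : ∀ (s : F) (v : F × ZMod 2),
      Ls s v = (s ^ 2 * v.1 + tr (s * v.1) • s + v.2 • s, tr (s * v.1))) :
    (∀ (s : F) (v : F × ZMod 2), B v (Ls s v) = 0) ∧
    (∀ (s : F) (v w : F × ZMod 2), B v (Ls s w) = B (Ls s v) w) := by
  obtain rfl : tr = Algebra.trace (ZMod 2) F := funext htr
  obtain rfl : B = augForm (Algebra.trace (ZMod 2) F) := funext₂ hB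
  obtain rfl : Ls = augOp (Algebra.trace (ZMod 2) F) := funext₂ hLs
  have hsq (z : F) : Algebra.trace (ZMod 2) F (z ^ 2) = Algebra.trace (ZMod 2) F z ^ 2 := by
    rw [ZMod.pow_card, ← Algebra.trace_pow_card (ZMod 2) F z, ZMod.card]
  exact ⟨augForm_augOp_self _ hsq, augForm_augOp_comm _⟩

/-- Let `F` be a finite field of characteristic 2, `tr : F → 𝔽₂` the
field trace, `V := F × 𝔽₂` with bilinear form `(x,α)·(y,β) = tr(xy) + αβ`, and for
`s ∈ F` let `L_s(x,α) := (s²x + tr(sx)·s + α·s, tr(sx))`. Then (i) every `v ∈ V`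
satisfies `v · L_s v = 0`, and (ii) `L_s` is self-adjoint for the bilinear form:
`v · L_s w = L_s v · w`. -/
theorem stmt_15 (F : Type*) [Field F] [Fintype F] [CharP F 2] [Algebra (ZMod 2) F]
    (tr : F → ZMod 2) (htr : ∀ z, tr z = Algebra.trace (ZMod 2) F z)
    (B : (F × ZMod 2) → (F × ZMod 2) → ZMod 2)
    (hB : ∀ v w : F × ZMod 2, B v w = tr (v.1 * w.1) + v.2 * w.2)
    (Ls : F → (F × ZMod 2) → (F × ZMod 2))
    (hLs : ∀ (s : F) (v : F × ZMod 2),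
      Ls s v = (s ^ 2 * v.1 + tr (s * v.1) • s + v.2 • s, tr (s * v.1))) :
    (∀ (s : F) (v : F × ZMod 2), B v (Ls s v) = 0) ∧
    (∀ (s : F) (v w : F × ZMod 2), B v (Ls s w) = B (Ls s v) w) :=
  stmt_15_general F tr htr B hB Ls hLs
end

section
/- Let F be a finite field of characteristic 2 of odd degree over its prime field (equivalently, tr(1) = 1, e.g. F = 𝔽_{2^{k−1}} with k even), let tr : F → 𝔽₂ denote the field trace, and consider the 𝔽₂-vector space V := F × 𝔽₂. For s ∈ F define L_s : V → V by L_s(x, α) := (s²x + s·tr(sx) + αs, tr(sx)). Then for every r, s ∈ F with r ≠ s, the only (x, α) ∈ V with L_r(x, α) = L_s(x, α) is (x, α) = (0, 0); that is, L_r + L_s is an injective (hence bijective) 𝔽₂-linear map on V. -/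
/-!
Write `t = tr(rx) = tr(sx)`. Subtracting the first components of `L_r(x,α)` and `L_s(x,α)` gives
`(r + s)² x = (t + α)(r + s)` in characteristic 2, so `(r + s) x = t + α ∈ 𝔽₂ ⊆ F`. Taking traces,
the left side has trace `tr(rx) + tr(sx) = 0` while the right side has trace `(t + α) tr(1) = t + α`.
Hence `t + α = 0`, so `x = 0`, and then `t = tr(0) = 0` forces `α = 0`.
-/

section

variable {F : Type*} [Field F] [Algebra (ZMod 2) F]

def kerdockMap (ℓ : F →ₗ[ZMod 2] ZMod 2) (s : F) (v : F × ZMod 2) : F × ZMod 2 :=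
  (s ^ 2 * v.1 + ℓ (s * v.1) • s + v.2 • s, ℓ (s * v.1))

theorem apply_algebraMap_of_apply_one (ℓ : F →ₗ[ZMod 2] ZMod 2) (h1 : ℓ 1 = 1) (c : ZMod 2) :
    ℓ (algebraMap (ZMod 2) F c) = c := by
  rw [Algebra.algebraMap_eq_smul_one, map_smul, h1, smul_eq_mul, mul_one]

variable [CharP F 2]

theorem mul_fst_eq_algebraMap_of_kerdockMap_eq {ℓ : F →ₗ[ZMod 2] ZMod 2} {r s : F}
    {v : F × ZMod 2} (hrs : r ≠ s) (h : kerdockMap ℓ r v = kerdockMap ℓ s v) :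
    (r + s) * v.1 = algebraMap (ZMod 2) F (ℓ (s * v.1) + v.2) := by
  obtain ⟨x, α⟩ := v
  simp only [kerdockMap, Prod.mk.injEq, Algebra.smul_def] at h
  obtain ⟨hfst, hsnd⟩ := h
  rw [hsnd] at hfst
  refine mul_left_cancel₀ (CharTwo.add_eq_zero.not.mpr hrs) ?_
  grind

theorem eq_zero_of_kerdockMap_eq {ℓ : F →ₗ[ZMod 2] ZMod 2} (h1 : ℓ 1 = 1) {r s : F}
    (hrs : r ≠ s) {v : F × ZMod 2} (h : kerdockMap ℓ r v = kerdockMap ℓ s v) : v = 0 := by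
  have hmul := mul_fst_eq_algebraMap_of_kerdockMap_eq hrs h
  have hsnd : ℓ (r * v.1) = ℓ (s * v.1) := congrArg Prod.snd h
  have hsum : ℓ (s * v.1) + v.2 = 0 := by
    rw [← apply_algebraMap_of_apply_one ℓ h1 (ℓ (s * v.1) + v.2), ← hmul, add_mul, map_add, hsnd,
      CharTwo.add_self_eq_zero]
  have hx : v.1 = 0 := by
    rw [hsum, map_zero] at hmul
    exact (mul_eq_zero.mp hmul).resolve_left (CharTwo.add_eq_zero.not.mpr hrs)
  rw [hx, mul_zero, map_zero, zero_add] at hsum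
  exact Prod.ext hx hsum

end

theorem stmt_16_general (F : Type*) [Field F] [CharP F 2] [Algebra (ZMod 2) F]
    (tr : F → ZMod 2) (htr : ∀ z, tr z = Algebra.trace (ZMod 2) F z)
    (htr1 : tr 1 = 1)
    (Ls : F → (F × ZMod 2) → (F × ZMod 2))
    (hLs : ∀ (s : F) (v : F × ZMod 2),
      Ls s v = (s ^ 2 * v.1 + tr (s * v.1) • s + v.2 • s, tr (s * v.1))) :
    ∀ r s : F, r ≠ s → ∀ v : F × ZMod 2, Ls r v = Ls s v → v = 0 := by
  obtain rfl : tr = Algebra.trace (ZMod 2) F := funext htr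
  obtain rfl : Ls = kerdockMap (Algebra.trace (ZMod 2) F) := funext₂ hLs
  exact fun r s hrs v h => eq_zero_of_kerdockMap_eq htr1 hrs h

/-- Let `F` be a finite field of characteristic 2 whose field trace
`tr : F → 𝔽₂` satisfies `tr(1) = 1` (equivalently, `F` has odd degree over `𝔽₂`),
and for `s ∈ F` let `L_s : F × 𝔽₂ → F × 𝔽₂` be given by
`L_s(x,α) := (s²x + tr(sx)·s + α·s, tr(sx))`. Then for `r ≠ s`, the only `v` with
`L_r v = L_s v` is `v = 0`; i.e. `L_r + L_s` is injective. -/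
theorem stmt_16 (F : Type*) [Field F] [Fintype F] [CharP F 2] [Algebra (ZMod 2) F]
    (tr : F → ZMod 2) (htr : ∀ z, tr z = Algebra.trace (ZMod 2) F z)
    (htr1 : tr 1 = 1)
    (Ls : F → (F × ZMod 2) → (F × ZMod 2))
    (hLs : ∀ (s : F) (v : F × ZMod 2),
      Ls s v = (s ^ 2 * v.1 + tr (s * v.1) • s + v.2 • s, tr (s * v.1))) :
    ∀ r s : F, r ≠ s → ∀ v : F × ZMod 2, Ls r v = Ls s v → v = 0 :=
  stmt_16_general F tr htr htr1 Ls hLs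
end

section
/- Let m, s ∈ ℕ, let ε > δ ≥ 0, and let v, μ̂ ∈ ℝ^m. Suppose there exists w ∈ ℝ^m with at most s nonzero entries such that ‖v − w‖_∞ ≤ δ, and suppose ‖μ̂ − v‖_∞ < (ε − δ)/2. Then: (1) every index i with |v_i| ≥ ε satisfies |μ̂_i| > (ε + δ)/2; (2) every index i with |v_i| ≤ δ satisfies |μ̂_i| < (ε + δ)/2; and consequently (3) every set S ⊆ [m] of s indices of largest-magnitude entries of μ̂ (i.e., |S| = s and |μ̂_i| ≥ |μ̂_j| for every i ∈ S and j ∉ S) contains the set {i ∈ [m] : |v_i| ≥ ε}, which is the support of the ε-hard threshold h_ε(v). -/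
/-!
An entry of `μ̂` is within `(ε - δ)/2` of the corresponding entry of `v`, so the threshold
`(ε + δ)/2` separates the entries where `|v i| ≥ ε` from those where `|v i| ≤ δ`; the latter
include every index outside the support `T` of the `s`-sparse approximation `w`. If a top-`s`
set `S` of `|μ̂|` missed some `i` with `|v i| ≥ ε`, then `i ∈ T \ S` and `#T ≤ #S` would force
some `j ∈ S \ T`, whose entry lies below the threshold while that of `i` lies above it,
contradicting the choice of `S`.
-/

section AbsPerturbation

variable {α : Type*} [AddCommGroup α] [LinearOrder α] [IsOrderedAddMonoid α] {a b r x y : α}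

theorem sub_lt_abs_of_le_abs_of_abs_sub_lt (ha : a ≤ |x|) (h : |y - x| < r) : a - r < |y| := by
  rw [sub_lt_iff_lt_add]
  calc a ≤ |x| := ha
    _ ≤ |y| + |y - x| := by
      rw [← sub_le_iff_le_add', abs_sub_comm]; exact abs_sub_abs_le_abs_sub x y
    _ < |y| + r := by gcongr

theorem abs_lt_add_of_abs_le_of_abs_sub_lt (hb : |x| ≤ b) (h : |y - x| < r) : |y| < b + r :=
  calc |y| ≤ |x| + |y - x| := by rw [← sub_le_iff_le_add']; exact abs_sub_abs_le_abs_sub y x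
    _ < b + r := add_lt_add_of_le_of_lt hb h

end AbsPerturbation

theorem Finset.exists_mem_notMem_of_card_le_of_mem_of_notMem {ι : Type*} {S T : Finset ι} {i : ι}
    (hcard : T.card ≤ S.card) (hiT : i ∈ T) (hiS : i ∉ S) : ∃ j ∈ S, j ∉ T := by
  by_contra! hST
  exact absurd (Finset.card_lt_card ⟨hST, fun hTS => hiS (hTS hiT)⟩) (not_lt.mpr hcard)

theorem mem_of_forall_le_of_card_le {ι α : Type*} [Preorder α] {f : ι → α} {S T : Finset ι}
    {t : α} {i : ι} (hS : ∀ k ∈ S, ∀ j ∉ S, f j ≤ f k) (hcard : T.card ≤ S.card)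
    (hT : ∀ j ∉ T, f j < t) (hi : t < f i) : i ∈ S := by
  by_contra hiS
  have hiT : i ∈ T := by
    by_contra hiT
    exact lt_asymm (hT i hiT) hi
  obtain ⟨j, hjS, hjT⟩ := Finset.exists_mem_notMem_of_card_le_of_mem_of_notMem hcard hiT hiS
  exact lt_irrefl _ (((hS j hjS i hiS).trans_lt (hT j hjT)).trans hi)

theorem stmt_17_general (m s : ℕ) (ε δ : ℝ)
    (v muhat : Fin m → ℝ)
    (hsparse : ∃ w : Fin m → ℝ,
      (Finset.univ.filter fun i => w i ≠ 0).card ≤ s ∧ ∀ i, |v i - w i| ≤ δ)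
    (hclose : ∀ i, |muhat i - v i| < (ε - δ) / 2) :
    (∀ i, ε ≤ |v i| → (ε + δ) / 2 < |muhat i|) ∧
    (∀ i, |v i| ≤ δ → |muhat i| < (ε + δ) / 2) ∧
    (∀ S : Finset (Fin m), S.card = s →
      (∀ i ∈ S, ∀ j ∉ S, |muhat j| ≤ |muhat i|) →
      ∀ i, ε ≤ |v i| → i ∈ S) := by
  obtain ⟨w, hw_card, hw_close⟩ := hsparse
  have large : ∀ i, ε ≤ |v i| → (ε + δ) / 2 < |muhat i| := fun i hi => by
    linarith [sub_lt_abs_of_le_abs_of_abs_sub_lt hi (hclose i)]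
  have small : ∀ i, |v i| ≤ δ → |muhat i| < (ε + δ) / 2 := fun i hi => by
    linarith [abs_lt_add_of_abs_le_of_abs_sub_lt hi (hclose i)]
  refine ⟨large, small, fun S hS hS_top i hi => ?_⟩
  refine mem_of_forall_le_of_card_le hS_top (hw_card.trans hS.ge) (fun j hj => small j ?_)
    (large i hi)
  have hwj : w j = 0 := by simpa using hj
  simpa [hwj] using hw_close j

/-- If `v` is entrywise `δ`-close to an `s`-sparse vector and `μ̂` is
entrywise `(ε−δ)/2`-close to `v`, then (1) every entry of `v` of magnitude at least `ε`
yields an entry of `μ̂` of magnitude more than `(ε+δ)/2`; (2) every entry of `v` of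
magnitude at most `δ` yields an entry of `μ̂` of magnitude less than `(ε+δ)/2`; and
(3) any set `S` of `s` indices of largest-magnitude entries of `μ̂` contains the
support `{i : |v_i| ≥ ε}` of the `ε`-hard threshold of `v`. -/
theorem stmt_17 (m s : ℕ) (ε δ : ℝ) (hδ : 0 ≤ δ) (hεδ : δ < ε)
    (v muhat : Fin m → ℝ)
    (hsparse : ∃ w : Fin m → ℝ,
      (Finset.univ.filter fun i => w i ≠ 0).card ≤ s ∧ ∀ i, |v i - w i| ≤ δ)
    (hclose : ∀ i, |muhat i - v i| < (ε - δ) / 2) :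
    (∀ i, ε ≤ |v i| → (ε + δ) / 2 < |muhat i|) ∧
    (∀ i, |v i| ≤ δ → |muhat i| < (ε + δ) / 2) ∧
    (∀ S : Finset (Fin m), S.card = s →
      (∀ i ∈ S, ∀ j ∉ S, |muhat j| ≤ |muhat i|) →
      ∀ i, ε ≤ |v i| → i ∈ S) :=
  stmt_17_general m s ε δ v muhat hsparse hclose
end
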